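/- arXiv:1703.06314 — 3 statements merged into one kernel-verified Lean document; each statement's English description precedes it below -/
import Mathlib

section
/- For any two distinct indices s, t ∈ F ∪ {∞}, the relational composition R_s ∘ R_t equals {(p, r) ∈ (F × F) × (F × F) : p ≠ r, (p, r) ∉ R_s, and (p, r) ∉ R_t}; that is, there exists z with (p, z) ∈ R_s and (z, r) ∈ R_t if and only if p ≠ r and the slope of the pair (p, r) is neither s nor t. -/
/-- The "slope `s`" relation on the affine plane `F × F`.  `some s` is the
relation of lines with slope `s`; `none` is the relation `R_∞` of vertical lines. -/
def slopeRel {F : Type*} [Field F] (s : Option F) (p r : F × F) : Prop :=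
  match s with
  | some s => p.1 ≠ r.1 ∧ r.2 - p.2 = s * (r.1 - p.1)
  | none => p.1 = r.1 ∧ p.2 ≠ r.2

/-!
Lying on a common line of slope `s` is an equivalence relation whose strict part is `R_s`, and
two lines of distinct slopes meet in exactly one point. The intermediate point is forced to be
the meeting point of the `s`-line through `p` and the `t`-line through `r`, and it differs from
both `p` and `r` exactly when `r` lies on neither line through `p`.
-/

section EquivalenceRelations

variable {α : Type*} {L₁ L₂ : α → α → Prop}

theorem exists_strict_comp_iff (h₁ : Equivalence L₁) (h₂ : Equivalence L₂)
    (hinter : ∀ a b, L₁ a b → L₂ a b → a = b) (hmeet : ∀ a b, ∃ c, L₁ a c ∧ L₂ c b) (a b : α) :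
    (∃ c, (a ≠ c ∧ L₁ a c) ∧ (c ≠ b ∧ L₂ c b)) ↔ a ≠ b ∧ ¬L₁ a b ∧ ¬L₂ a b := by
  constructor
  · rintro ⟨c, ⟨hac, h₁ac⟩, hcb, h₂cb⟩
    refine ⟨?_, fun h₁ab => ?_, fun h₂ab => ?_⟩
    · rintro rfl
      exact hac (hinter a c h₁ac (h₂.symm h₂cb))
    · exact hcb (hinter c b (h₁.trans (h₁.symm h₁ac) h₁ab) h₂cb)
    · exact hac (hinter a c h₁ac (h₂.trans h₂ab (h₂.symm h₂cb)))
  · rintro ⟨hab, hn₁, hn₂⟩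
    obtain ⟨c, h₁ac, h₂cb⟩ := hmeet a b
    refine ⟨c, ⟨?_, h₁ac⟩, ?_, h₂cb⟩
    · rintro rfl
      exact hn₂ h₂cb
    · rintro rfl
      exact hn₁ h₁ac

end EquivalenceRelations

section AffinePlane

variable {F : Type*} [Field F]

def sameLine (s : Option F) (p r : F × F) : Prop :=
  match s with
  | some s => r.2 - p.2 = s * (r.1 - p.1)
  | none => p.1 = r.1

theorem sameLine_equivalence (s : Option F) : Equivalence (sameLine s) := by
  cases s with
  | none => exact ⟨fun _ => rfl, Eq.symm, Eq.trans⟩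
  | some s =>
    refine ⟨fun _ => ?_, fun h => ?_, fun h h' => ?_⟩ <;> simp only [sameLine] at *
    · ring
    · linear_combination -h
    · linear_combination h + h'

theorem slopeRel_iff_ne_and_sameLine (s : Option F) (p r : F × F) :
    slopeRel s p r ↔ p ≠ r ∧ sameLine s p r := by
  obtain ⟨p₁, p₂⟩ := p
  obtain ⟨r₁, r₂⟩ := r
  cases s with
  | none => simp only [slopeRel, sameLine, ne_eq, Prod.mk.injEq]; tauto
  | some s =>
    simp only [slopeRel, sameLine, ne_eq, Prod.mk.injEq]
    constructor
    · rintro ⟨h₁, h⟩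
      exact ⟨fun h' => h₁ h'.1, h⟩
    · rintro ⟨hpr, h⟩
      refine ⟨fun h₁ => hpr ⟨h₁, ?_⟩, h⟩
      subst h₁
      linear_combination -h

theorem eq_of_sameLine_some_of_fst_eq {a : F} {p r : F × F} (h : sameLine (some a) p r)
    (h₁ : p.1 = r.1) : p = r := by
  simp only [sameLine, h₁, sub_self, mul_zero, sub_eq_zero] at h
  exact Prod.ext h₁ h.symm

theorem eq_of_sameLine_of_sameLine {s t : Option F} (hst : s ≠ t) {p r : F × F}
    (hs : sameLine s p r) (ht : sameLine t p r) : p = r := by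
  cases s with
  | none =>
    obtain ⟨b, rfl⟩ := Option.ne_none_iff_exists'.mp hst.symm
    exact eq_of_sameLine_some_of_fst_eq ht hs
  | some a =>
    cases t with
    | none => exact eq_of_sameLine_some_of_fst_eq hs ht
    | some b =>
      simp only [sameLine] at hs ht
      have hab : a - b ≠ 0 := sub_ne_zero.mpr fun h => hst (congrArg some h)
      have : (a - b) * (r.1 - p.1) = 0 := by linear_combination ht - hs
      refine eq_of_sameLine_some_of_fst_eq hs ?_
      exact (sub_eq_zero.mp ((mul_eq_zero.mp this).resolve_left hab)).symm

theorem exists_sameLine_sameLine {s t : Option F} (hst : s ≠ t) (p r : F × F) :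
    ∃ z, sameLine s p z ∧ sameLine t z r := by
  obtain ⟨p₁, p₂⟩ := p
  obtain ⟨r₁, r₂⟩ := r
  cases s with
  | none =>
    obtain ⟨b, rfl⟩ := Option.ne_none_iff_exists'.mp hst.symm
    exact ⟨(p₁, r₂ - b * (r₁ - p₁)), rfl, by simp only [sameLine]; ring⟩
  | some a =>
    cases t with
    | none => exact ⟨(r₁, p₂ + a * (r₁ - p₁)), by simp only [sameLine]; ring, rfl⟩
    | some b =>
      have hab : a - b ≠ 0 := sub_ne_zero.mpr fun h => hst (congrArg some h)
      -- the abscissa where the line of slope `a` through `p` meets the one of slope `b` through `r`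
      set x := (r₂ - p₂ + a * p₁ - b * r₁) / (a - b)
      have hxe : x * (a - b) = r₂ - p₂ + a * p₁ - b * r₁ := div_mul_cancel₀ _ hab
      exact ⟨(x, p₂ + a * (x - p₁)), by simp only [sameLine]; ring,
        by simp only [sameLine]; linear_combination -hxe⟩

end AffinePlane

theorem stmt2_general (F : Type*) [Field F] :
    ∀ s t : Option F, s ≠ t → ∀ p r : F × F,
      (∃ z : F × F, slopeRel s p z ∧ slopeRel t z r) ↔
        (p ≠ r ∧ ¬ slopeRel s p r ∧ ¬ slopeRel t p r) := by
  intro s t hst p r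
  simp only [slopeRel_iff_ne_and_sameLine]
  rw [exists_strict_comp_iff (sameLine_equivalence s) (sameLine_equivalence t)
    (fun _ _ => eq_of_sameLine_of_sameLine hst) (exists_sameLine_sameLine hst)]
  tauto

/-- For distinct slopes `s ≠ t`, the composition `R_s ∘ R_t` is exactly the set of
pairs of distinct points whose slope is neither `s` nor `t`. -/
theorem stmt2 (q : ℕ) (hq : IsPrimePow q) (F : Type*) [Field F] [Fintype F]
    (hcard : Fintype.card F = q) :
    ∀ s t : Option F, s ≠ t → ∀ p r : F × F,
      (∃ z : F × F, slopeRel s p z ∧ slopeRel t z r) ↔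
        (p ≠ r ∧ ¬ slopeRel s p r ∧ ¬ slopeRel t p r) :=
  stmt2_general F
end

section
/- Fix u, z ∈ D. The number of functions g : D × D → Fin n for which there exist an index s ∈ F ∪ {∞} and a color j ∈ Fin n such that either no w ∈ D satisfies (u,w) ∈ R_s and g(w,z) = j, or no w ∈ D satisfies (z,w) ∈ R_s and g(u,w) = j, is at most 2n(q+1) · (n − 1)^{q−1} · n^{q⁴ − (q−1)}. Equivalently, under the uniform distribution on colorings, the probability that the edge (u, z) fails one of these witness conditions is at most 2n(q+1)(1 − 1/n)^{q−1}. -/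
/-!
A coloring is bad for the pair `(u, z)` when, for some slope `s`, color `j` and side, it never
uses `j` on the `q - 1` edges joining `z` to the punctured `s`-line through `u` (or `u` to the
punctured line through `z`). These edges are distinct, so a fixed such event is met by exactly
`(n - 1) ^ (q - 1) * n ^ (q ^ 4 - (q - 1))` colorings, and a union bound over the `q + 1` slopes,
`n` colors and two sides gives the claim.
-/

open Finset

instance slopeRel.decidablePred {F : Type*} [Field F] [DecidableEq F] (s : Option F) (p : F × F) :
    DecidablePred (slopeRel s p) := fun r =>
  match s with
  | some s => inferInstanceAs (Decidable (p.1 ≠ r.1 ∧ r.2 - p.2 = s * (r.1 - p.1)))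
  | none => inferInstanceAs (Decidable (p.1 = r.1 ∧ p.2 ≠ r.2))

theorem card_filter_forall_mem_apply_ne {ι α : Type*} [Fintype ι] [DecidableEq ι] [Fintype α]
    [DecidableEq α] (T : Finset ι) (a : α) :
    #{g : ι → α | ∀ i ∈ T, g i ≠ a} =
      (Fintype.card α - 1) ^ #T * Fintype.card α ^ (Fintype.card ι - #T) := by
  have : ({g : ι → α | ∀ i ∈ T, g i ≠ a} : Finset (ι → α))
      = Fintype.piFinset fun i => if i ∈ T then univ.erase a else univ := by
    ext g
    simp only [mem_filter, mem_univ, true_and, Fintype.mem_piFinset]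
    refine forall_congr' fun i => ?_
    split_ifs with hi <;> simp [hi]
  rw [this, Fintype.card_piFinset, prod_apply_ite]
  simp [filter_not, card_sdiff]

theorem card_filter_slopeRel {F : Type*} [Field F] [Fintype F] [DecidableEq F] (s : Option F)
    (p : F × F) : #{w | slopeRel s p w} = Fintype.card F - 1 := by
  cases s with
  | none =>
    have : ({w | slopeRel none p w} : Finset (F × F)) =
        (univ.erase p.2).map (.sectR p.1 F) := by
      ext ⟨x, y⟩
      simp only [mem_filter, mem_univ, true_and, mem_map, mem_erase]
      simp [slopeRel, eq_comm, and_comm]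
    simp [this]
  | some s =>
    have : ({w | slopeRel (some s) p w} : Finset (F × F)) =
        (univ.erase p.1).image fun x => (x, p.2 + s * (x - p.1)) := by
      ext ⟨x, y⟩
      simp only [mem_filter, mem_univ, true_and, mem_image, mem_erase, and_true, Prod.mk.injEq]
      simp only [slopeRel]
      constructor
      · rintro ⟨hx, hy⟩
        exact ⟨x, Ne.symm hx, rfl, by linear_combination -hy⟩
      · rintro ⟨x, hx, rfl, rfl⟩
        exact ⟨Ne.symm hx, by ring⟩
    rw [this, card_image_of_injective _ fun x y h => (Prod.mk.inj h).1]
    simp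

section avoidingColorings

variable {F ι α : Type*} [Field F] [Fintype F] [DecidableEq F] [Fintype ι] [DecidableEq ι]
  [Fintype α] [DecidableEq α]

def avoidingColorings (e : F × F ↪ ι) (s : Option F) (p : F × F) (a : α) : Finset (ι → α) :=
  {g | ¬∃ w, slopeRel s p w ∧ g (e w) = a}

theorem card_avoidingColorings (e : F × F ↪ ι) (s : Option F) (p : F × F) (a : α) :
    #(avoidingColorings e s p a) =
      (Fintype.card α - 1) ^ (Fintype.card F - 1) *
        Fintype.card α ^ (Fintype.card ι - (Fintype.card F - 1)) := by
  rw [← card_filter_slopeRel s p, ← card_map e]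
  convert card_filter_forall_mem_apply_ne (({w | slopeRel s p w} : Finset (F × F)).map e) a
    using 2
  ext g
  simp only [avoidingColorings, mem_filter, mem_univ, true_and, forall_mem_map, not_exists,
    not_and]

end avoidingColorings

theorem stmt7_general (q : ℕ) (F : Type*) [Field F] [Fintype F]
    (hcard : Fintype.card F = q) (n : ℕ) (u z : F × F) :
    {g : (F × F) × (F × F) → Fin n |
        ∃ (s : Option F) (j : Fin n),
          (¬ ∃ w : F × F, slopeRel s u w ∧ g (w, z) = j) ∨
          (¬ ∃ w : F × F, slopeRel s z w ∧ g (u, w) = j)}.ncard ≤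
      2 * n * (q + 1) * ((n - 1) ^ (q - 1) * n ^ (q ^ 4 - (q - 1))) := by
  classical
  set B := (n - 1) ^ (q - 1) * n ^ (q ^ 4 - (q - 1))
  have hcard_avoiding (e : F × F ↪ (F × F) × (F × F)) (s : Option F) (p : F × F)
      (j : Fin n) : #(avoidingColorings e s p j) = B := by
    rw [card_avoidingColorings, Fintype.card_fin]
    simp only [Fintype.card_prod, hcard, B]
    ring_nf
  have hunion : {g : (F × F) × (F × F) → Fin n |
        ∃ (s : Option F) (j : Fin n),
          (¬ ∃ w : F × F, slopeRel s u w ∧ g (w, z) = j) ∨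
          (¬ ∃ w : F × F, slopeRel s z w ∧ g (u, w) = j)} =
      ↑((univ : Finset (Option F × Fin n)).biUnion fun sj =>
        avoidingColorings (.sectL _ z) sj.1 u sj.2 ∪
          avoidingColorings (.sectR u _) sj.1 z sj.2) := by
    ext g
    simp [avoidingColorings]
  rw [hunion, Set.ncard_coe_finset]
  calc _ ≤ #(univ : Finset (Option F × Fin n)) * (B + B) :=
        card_biUnion_le_card_mul _ _ _ fun sj _ =>
          (card_union_le _ _).trans (by rw [hcard_avoiding, hcard_avoiding])
    _ = 2 * n * (q + 1) * B := by
        rw [card_univ, Fintype.card_prod, Fintype.card_option, Fintype.card_fin, hcard]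
        ring

/-- Fix `u, z ∈ D` (where `D = F × F`, `|F| = q`).  The number of colorings
`g : D × D → Fin n` for which there exist a slope `s ∈ F ∪ {∞}` and a color `j` such
that either no `w` satisfies `(u, w) ∈ R_s` and `g (w, z) = j`, or no `w` satisfies
`(z, w) ∈ R_s` and `g (u, w) = j`, is at most `2n(q+1) * (n − 1)^(q−1) * n^(q⁴ − (q−1))`;
equivalently, under the uniform distribution the probability that the edge `(u, z)`
fails one of these witness conditions is at most `2n(q+1)(1 − 1/n)^(q−1)`. -/
theorem stmt7 (q : ℕ) (hq : IsPrimePow q) (F : Type*) [Field F] [Fintype F]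
    (hcard : Fintype.card F = q) (n : ℕ) (u z : F × F) :
    {g : (F × F) × (F × F) → Fin n |
        ∃ (s : Option F) (j : Fin n),
          (¬ ∃ w : F × F, slopeRel s u w ∧ g (w, z) = j) ∨
          (¬ ∃ w : F × F, slopeRel s z w ∧ g (u, w) = j)}.ncard ≤
      2 * n * (q + 1) * ((n - 1) ^ (q - 1) * n ^ (q ^ 4 - (q - 1))) :=
  stmt7_general q F hcard n u z
end

section
/- (Union-bound existence of a good coloring.) Let q be a prime power and n ≥ 1. If 2·(q² choose 2)·n²·(1 − 1/n²)^{q²} + 2·q⁴·n·(q+1)·(1 − 1/n)^{q−1} < 1, then there exists a good coloring f : D × D → Fin n. -/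
/-- A coloring `f : D × D → Fin n` (of the edges between `D = F × F` and a disjoint
copy of `D`) is good if it satisfies the witness conditions (1a), (1b), (2a), (2b)
needed to turn the standard representation of `𝔏(q,1)` into one of `𝔏(q,n)`. -/
def IsGood {F : Type*} [Field F] {n : ℕ} (f : (F × F) × (F × F) → Fin n) : Prop :=
  (∀ u v : F × F, u ≠ v → ∀ i j : Fin n, ∃ z : F × F, f (u, z) = i ∧ f (v, z) = j) ∧
  (∀ u v : F × F, u ≠ v → ∀ i j : Fin n, ∃ z : F × F, f (z, u) = i ∧ f (z, v) = j) ∧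
  (∀ u z : F × F, ∀ s : Option F, ∀ j : Fin n,
    ∃ w : F × F, slopeRel s u w ∧ f (w, z) = j) ∧
  (∀ u z : F × F, ∀ s : Option F, ∀ j : Fin n,
    ∃ w : F × F, slopeRel s z w ∧ f (u, w) = j)

/-! A uniformly random coloring violates a given instance of (1a) or (1b) with probability
`(1 - 1/n²)^(q²)` and one of (2a) or (2b) with probability `(1 - 1/n)^(q - 1)`, since the cells
each instance constrains are distinct and independent; the hypothesis says that the expected number
of violated instances is below `1`. The argument is carried out by counting colorings. -/

open Function

section Counting

variable {ι β γ α : Type*}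

theorem Nat.card_subtype_ne [Finite α] (a : α) : Nat.card {x // x ≠ a} = Nat.card α - 1 := by
  have := Fintype.ofFinite α
  classical
  rw [Nat.card_eq_fintype_card, Fintype.card_subtype_compl, Fintype.card_subtype_eq,
    Nat.card_eq_fintype_card]

theorem card_subtype_comp_of_injective [Finite ι] (κ : β → ι) (hκ : Injective κ)
    (Q : (β → α) → Prop) :
    Nat.card {f : ι → α // Q (f ∘ κ)}
      = Nat.card {g // Q g} * Nat.card α ^ (Nat.card ι - Nat.card β) := by
  classical
  have := Fintype.ofFinite ι
  let e : (ι → α) ≃ (β → α) × ({i // i ∉ Set.range κ} → α) :=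
    (Equiv.piEquivPiSubtypeProd (· ∈ Set.range κ) fun _ => α).trans
      (Equiv.prodCongr ((Equiv.ofInjective κ hκ).symm.arrowCongr (Equiv.refl α))
        (Equiv.refl _))
  have e' : {f : ι → α // Q (f ∘ κ)} ≃ {x : (β → α) × ({i // i ∉ Set.range κ} → α) // Q x.1} :=
    e.subtypeEquiv fun _ => Iff.rfl
  rw [Nat.card_congr (e'.trans Equiv.prodSubtypeFstEquivSubtypeProd), Nat.card_prod,
    Nat.card_fun, Nat.card_eq_fintype_card (α := {i // i ∉ _}), Fintype.card_subtype_compl,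
    ← Nat.card_eq_fintype_card, ← Nat.card_eq_fintype_card, Nat.card_range_of_injective hκ]

theorem card_forall_curry_ne [Finite ι] [Finite β] [Finite γ] [Finite α] (κ : β × γ → ι)
    (hκ : Injective κ) (c : γ → α) :
    Nat.card {f : ι → α // ∀ b, (fun k => f (κ (b, k))) ≠ c}
      = (Nat.card α ^ Nat.card γ - 1) ^ Nat.card β
        * Nat.card α ^ (Nat.card ι - Nat.card β * Nat.card γ) := by
  have := Fintype.ofFinite β
  have e : {g : β × γ → α // ∀ b, curry g b ≠ c} ≃ {h : β → γ → α // ∀ b, h b ≠ c} :=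
    (Equiv.curry β γ α).subtypeEquiv fun _ => Iff.rfl
  have hQ : Nat.card {g : β × γ → α // ∀ b, curry g b ≠ c}
      = (Nat.card α ^ Nat.card γ - 1) ^ Nat.card β := by
    rw [Nat.card_congr (e.trans (Equiv.subtypePiEquivPi (p := fun _ x => x ≠ c))), Nat.card_pi]
    simp only [Nat.card_subtype_ne, Nat.card_fun, Finset.prod_const, Finset.card_univ,
      Nat.card_eq_fintype_card]
  rw [← Nat.card_prod, ← hQ]
  exact card_subtype_comp_of_injective κ hκ fun g => ∀ b, curry g b ≠ c

variable {X Y : Type*} [Finite X] [Finite Y] [Finite α]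

theorem card_forall_not_and_left {u v : X} (huv : u ≠ v) (i j : α) :
    Nat.card {f : X × Y → α // ∀ z, ¬(f (u, z) = i ∧ f (v, z) = j)}
      = (Nat.card α ^ 2 - 1) ^ Nat.card Y * Nat.card α ^ (Nat.card (X × Y) - Nat.card Y * 2) := by
  have hκ : Injective fun p : Y × Bool => (cond p.2 u v, p.1) := by
    rintro ⟨z₁, _ | _⟩ ⟨z₂, _ | _⟩ h <;> simp_all [eq_comm]
  have := card_forall_curry_ne _ hκ fun k => cond k i j
  simp only [ne_eq, funext_iff, Bool.forall_bool, cond_false, cond_true,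
    Nat.card_eq_fintype_card (α := Bool), Fintype.card_bool] at this
  simpa only [and_comm] using this

theorem card_forall_not_and_right {u v : Y} (huv : u ≠ v) (i j : α) :
    Nat.card {f : X × Y → α // ∀ z, ¬(f (z, u) = i ∧ f (z, v) = j)}
      = (Nat.card α ^ 2 - 1) ^ Nat.card X * Nat.card α ^ (Nat.card (X × Y) - Nat.card X * 2) := by
  have hκ : Injective fun p : X × Bool => (p.1, cond p.2 u v) := by
    rintro ⟨z₁, _ | _⟩ ⟨z₂, _ | _⟩ h <;> simp_all [eq_comm]
  have := card_forall_curry_ne _ hκ fun k => cond k i j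
  simp only [ne_eq, funext_iff, Bool.forall_bool, cond_false, cond_true,
    Nat.card_eq_fintype_card (α := Bool), Fintype.card_bool] at this
  simpa only [and_comm] using this

theorem card_forall_ne_left (P : X → Prop) (z : Y) (j : α) :
    Nat.card {f : X × Y → α // ∀ w, P w → f (w, z) ≠ j}
      = (Nat.card α - 1) ^ Nat.card {w // P w}
        * Nat.card α ^ (Nat.card (X × Y) - Nat.card {w // P w}) := by
  have hκ : Injective fun p : {w // P w} × Unit => (p.1.1, z) := by
    rintro ⟨⟨w₁, _⟩, ⟨⟩⟩ ⟨⟨w₂, _⟩, ⟨⟩⟩ h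
    simp_all
  have := card_forall_curry_ne _ hκ fun _ => j
  simpa only [ne_eq, funext_iff, forall_const, Subtype.forall, Nat.card_unique, pow_one,
    mul_one] using this

theorem card_forall_ne_right (P : Y → Prop) (u : X) (j : α) :
    Nat.card {f : X × Y → α // ∀ w, P w → f (u, w) ≠ j}
      = (Nat.card α - 1) ^ Nat.card {w // P w}
        * Nat.card α ^ (Nat.card (X × Y) - Nat.card {w // P w}) := by
  have hκ : Injective fun p : {w // P w} × Unit => (u, p.1.1) := by
    rintro ⟨⟨w₁, _⟩, ⟨⟩⟩ ⟨⟨w₂, _⟩, ⟨⟩⟩ h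
    simp_all
  have := card_forall_curry_ne _ hκ fun _ => j
  simpa only [ne_eq, funext_iff, forall_const, Subtype.forall, Nat.card_unique, pow_one,
    mul_one] using this

end Counting

theorem sub_one_pow_mul_pow_sub {K : Type*} [Field K] {x : K} (hx : x ≠ 0) {d k m : ℕ}
    (h : k * d ≤ m) : (x ^ d - 1) ^ k * x ^ (m - k * d) = (1 - 1 / x ^ d) ^ k * x ^ m := by
  have hx' : (1 - 1 / x ^ d) * x ^ d = x ^ d - 1 := by field_simp
  rw [← hx', mul_pow, ← pow_mul', mul_assoc, ← pow_add, Nat.add_sub_cancel' h]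

open Finset in
theorem exists_forall_not_of_sum_card_lt {Ω I : Type*} [Finite Ω] [Fintype I]
    (E : I → Ω → Prop) (h : ∑ t, Nat.card {x // E t x} < Nat.card Ω) : ∃ x, ∀ t, ¬E t x := by
  have := Fintype.ofFinite Ω
  classical
  by_contra! hE
  refine h.not_ge ?_
  calc Nat.card Ω = #(univ.biUnion fun t => {x | E t x}) := by
        rw [Nat.card_eq_fintype_card, ← card_univ]
        congr
        ext x
        simpa using hE x
    _ ≤ ∑ t, #{x | E t x} := card_biUnion_le
    _ = ∑ t, Nat.card {x // E t x} := by simp only [Nat.card_eq_fintype_card, Fintype.card_subtype]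

theorem card_slopeRel {F : Type*} [Field F] [Finite F] (s : Option F) (u : F × F) :
    Nat.card {w // slopeRel s u w} = Nat.card F - 1 := by
  cases s with
  | none =>
    rw [← Nat.card_subtype_ne u.2]
    exact Nat.card_congr
      { toFun := fun w => ⟨w.1.2, fun h => w.2.2 h.symm⟩
        invFun := fun t => ⟨(u.1, t), rfl, Ne.symm t.2⟩
        left_inv := fun ⟨_, hw⟩ => Subtype.ext (Prod.ext hw.1 rfl)
        right_inv := fun _ => rfl }
  | some s =>
    rw [← Nat.card_subtype_ne u.1]
    exact Nat.card_congr
      { toFun := fun w => ⟨w.1.1, fun h => w.2.1 h.symm⟩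
        invFun := fun t => ⟨(t, u.2 + s * (t - u.1)), Ne.symm t.2, by ring⟩
        left_inv := fun ⟨_, hw⟩ => Subtype.ext (Prod.ext rfl (by linear_combination -hw.2))
        right_inv := fun _ => rfl }

/-- Each of the `2 C(q², 2) n²` instances of (1a), (1b) fails for `(n² - 1)^(q²)` of the
`n^(2q²)` colorings of the cells it involves, and each of the `2 q⁴ (q + 1) n` instances of
(2a), (2b) for `(n - 1)^(q - 1)` of the `n^(q - 1)` colorings of its cells. -/
def failureCount (q n : ℕ) : ℕ :=
  2 * ((q ^ 2).choose 2 * n ^ 2 * ((n ^ 2 - 1) ^ q ^ 2 * n ^ (q ^ 4 - q ^ 2 * 2)))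
    + 2 * (q ^ 4 * (q + 1) * n * ((n - 1) ^ (q - 1) * n ^ (q ^ 4 - (q - 1))))

theorem failureCount_lt {q n : ℕ} (hq : 2 ≤ q) (hn : 1 ≤ n)
    (h : 2 * (Nat.choose (q ^ 2) 2 : ℝ) * n ^ 2 * (1 - 1 / (n : ℝ) ^ 2) ^ (q ^ 2)
        + 2 * (q : ℝ) ^ 4 * n * (q + 1) * (1 - 1 / (n : ℝ)) ^ (q - 1) < 1) :
    failureCount q n < n ^ q ^ 4 := by
  have hq2 : q ^ 2 * 2 ≤ q ^ 4 := by
    have : 2 ≤ q ^ 2 := hq.trans (Nat.le_self_pow two_ne_zero q)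
    nlinarith
  have hq1 : q - 1 ≤ q ^ 4 := (Nat.sub_le q 1).trans (Nat.le_self_pow (by norm_num) q)
  have hn0 : (n : ℝ) ≠ 0 := by positivity
  have hpair := sub_one_pow_mul_pow_sub hn0 hq2
  have hline : ((n : ℝ) - 1) ^ (q - 1) * n ^ (q ^ 4 - (q - 1))
      = (1 - 1 / n) ^ (q - 1) * n ^ q ^ 4 := by
    simpa using sub_one_pow_mul_pow_sub hn0 (d := 1) (by simpa using hq1)
  rw [failureCount, ← Nat.cast_lt (α := ℝ)]
  push_cast [Nat.cast_sub (Nat.one_le_pow 2 n hn), Nat.cast_sub hn, hpair, hline]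
  have := mul_lt_mul_of_pos_right h (by positivity : (0 : ℝ) < n ^ q ^ 4)
  linarith

section Conditions

variable {F : Type*} [Field F] [LinearOrder (F × F)] {n : ℕ}

variable (F n) in
/-- The summands index the instances of (1a), (1b), (2a), (2b). Pairs are listed only as `u < v`,
since (1a) at `(u, v, i, j)` is (1a) at `(v, u, j, i)`, and likewise for (1b). -/
abbrev GoodCondition : Type _ :=
  ({p : (F × F) × (F × F) // p.1 < p.2} × Fin n × Fin n) ⊕
  ({p : (F × F) × (F × F) // p.1 < p.2} × Fin n × Fin n) ⊕
  ((F × F) × (F × F) × Option F × Fin n) ⊕ ((F × F) × (F × F) × Option F × Fin n)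

def GoodCondition.Fails : GoodCondition F n → ((F × F) × (F × F) → Fin n) → Prop
  | .inl (p, i, j), f => ∀ z, ¬(f (p.1.1, z) = i ∧ f (p.1.2, z) = j)
  | .inr (.inl (p, i, j)), f => ∀ z, ¬(f (z, p.1.1) = i ∧ f (z, p.1.2) = j)
  | .inr (.inr (.inl (u, z, s, j))), f => ∀ w, slopeRel s u w → f (w, z) ≠ j
  | .inr (.inr (.inr (u, z, s, j))), f => ∀ w, slopeRel s z w → f (u, w) ≠ j

theorem isGood_of_forall_not_fails {f : (F × F) × (F × F) → Fin n}
    (hf : ∀ t : GoodCondition F n, ¬t.Fails f) : IsGood f := by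
  refine ⟨fun u v huv i j => ?_, fun u v huv i j => ?_, fun u z s j => ?_, fun u z s j => ?_⟩
  · rcases huv.lt_or_gt with h | h
    · simpa [GoodCondition.Fails] using hf (.inl (⟨(u, v), h⟩, i, j))
    · simpa [GoodCondition.Fails, and_comm] using hf (.inl (⟨(v, u), h⟩, j, i))
  · rcases huv.lt_or_gt with h | h
    · simpa [GoodCondition.Fails] using hf (.inr (.inl (⟨(u, v), h⟩, i, j)))
    · simpa [GoodCondition.Fails, and_comm] using hf (.inr (.inl (⟨(v, u), h⟩, j, i)))
  · simpa [GoodCondition.Fails] using hf (.inr (.inr (.inl (u, z, s, j))))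
  · simpa [GoodCondition.Fails] using hf (.inr (.inr (.inr (u, z, s, j))))

theorem sum_card_fails [Fintype F] :
    ∑ t : GoodCondition F n, Nat.card {f // t.Fails f} = failureCount (Nat.card F) n := by
  have hD : Nat.card (F × F) = Nat.card F ^ 2 := by rw [Nat.card_prod, sq]
  have hDD : Nat.card ((F × F) × (F × F)) = Nat.card F ^ 4 := by rw [Nat.card_prod, hD]; ring
  have hpairs : Fintype.card {p : (F × F) × (F × F) // p.1 < p.2} = (Nat.card F ^ 2).choose 2 := by
    rw [Fintype.card_subtype, Fintype.card_product_filter_lt, ← Nat.card_eq_fintype_card, hD]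
  have hpair : ∀ t, Nat.card {f // GoodCondition.Fails (F := F) (n := n) (.inl t) f}
      = (n ^ 2 - 1) ^ Nat.card F ^ 2 * n ^ (Nat.card F ^ 4 - Nat.card F ^ 2 * 2) := by
    rintro ⟨⟨_, h⟩, i, j⟩
    have := card_forall_not_and_left (Y := F × F) h.ne i j
    rwa [Nat.card_fin, hD, hDD] at this
  have hpair' : ∀ t, Nat.card {f // GoodCondition.Fails (F := F) (n := n) (.inr (.inl t)) f}
      = (n ^ 2 - 1) ^ Nat.card F ^ 2 * n ^ (Nat.card F ^ 4 - Nat.card F ^ 2 * 2) := by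
    rintro ⟨⟨_, h⟩, i, j⟩
    have := card_forall_not_and_right (X := F × F) h.ne i j
    rwa [Nat.card_fin, hD, hDD] at this
  have hline : ∀ t, Nat.card {f // GoodCondition.Fails (F := F) (n := n) (.inr (.inr (.inl t))) f}
      = (n - 1) ^ (Nat.card F - 1) * n ^ (Nat.card F ^ 4 - (Nat.card F - 1)) := by
    rintro ⟨u, z, s, j⟩
    have := card_forall_ne_left (slopeRel s u) z j
    rwa [Nat.card_fin, card_slopeRel, hDD] at this
  have hline' : ∀ t, Nat.card {f // GoodCondition.Fails (F := F) (n := n) (.inr (.inr (.inr t))) f}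
      = (n - 1) ^ (Nat.card F - 1) * n ^ (Nat.card F ^ 4 - (Nat.card F - 1)) := by
    rintro ⟨u, z, s, j⟩
    have := card_forall_ne_right (slopeRel s z) u j
    rwa [Nat.card_fin, card_slopeRel, hDD] at this
  simp only [Fintype.sum_sum_type, hpair, hpair', hline, hline', Finset.sum_const,
    Finset.card_univ, smul_eq_mul, Fintype.card_prod, Fintype.card_fin, Fintype.card_option,
    hpairs]
  rw [failureCount, ← Nat.card_eq_fintype_card]
  ring

end Conditions

theorem stmt8_general (q n : ℕ) (hn : 1 ≤ n)
    (h : 2 * (Nat.choose (q ^ 2) 2 : ℝ) * n ^ 2 * (1 - 1 / (n : ℝ) ^ 2) ^ (q ^ 2)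
        + 2 * (q : ℝ) ^ 4 * n * (q + 1) * (1 - 1 / (n : ℝ)) ^ (q - 1) < 1)
    (F : Type*) [Field F] [Fintype F] (hcard : Fintype.card F = q) :
    ∃ f : (F × F) × (F × F) → Fin n, IsGood f := by
  let : LinearOrder (F × F) := LinearOrder.lift' _ (Fintype.equivFin (F × F)).injective
  have hq : 2 ≤ q := hcard ▸ Fintype.one_lt_card
  have hcells : Nat.card ((F × F) × (F × F)) = q ^ 4 := by
    rw [Nat.card_prod, Nat.card_prod, Nat.card_eq_fintype_card, hcard]
    ring
  have hlt : ∑ t : GoodCondition F n, Nat.card {f // t.Fails f}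
      < Nat.card ((F × F) × (F × F) → Fin n) := by
    rw [sum_card_fails, Nat.card_fun, hcells, Nat.card_eq_fintype_card (α := F), hcard,
      Nat.card_fin]
    exact failureCount_lt hq hn h
  obtain ⟨f, hf⟩ := exists_forall_not_of_sum_card_lt _ hlt
  exact ⟨f, isGood_of_forall_not_fails hf⟩

/-- Union-bound existence of a good coloring: if
`2 C(q²,2) n² (1 − 1/n²)^(q²) + 2 q⁴ n (q+1) (1 − 1/n)^(q−1) < 1`
then a good coloring `f : D × D → Fin n` exists. -/
theorem stmt8 (q n : ℕ) (hq : IsPrimePow q) (hn : 1 ≤ n)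
    (h : 2 * (Nat.choose (q ^ 2) 2 : ℝ) * n ^ 2 * (1 - 1 / (n : ℝ) ^ 2) ^ (q ^ 2)
        + 2 * (q : ℝ) ^ 4 * n * (q + 1) * (1 - 1 / (n : ℝ)) ^ (q - 1) < 1)
    (F : Type*) [Field F] [Fintype F] (hcard : Fintype.card F = q) :
    ∃ f : (F × F) × (F × F) → Fin n, IsGood f :=
  stmt8_general q n hn h F hcard
end
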